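/- arXiv:hep-th/0611189 — 4 statements merged into one kernel-verified Lean document; each statement's English description precedes it below -/
import Mathlib

section
/- Let V be a module over a graded algebra with operators Q̃, M, L₀ on V satisfying Q̃² = −L₀ M, [Q̃, M] = 0, [Q̃, L₀] = 0, [L₀, M] = 0, where V carries a ℤ-grading V = ⊕_n V^n with Q̃ : V^n → V^{n+1}, M : V^n → V^{n+2}, and L₀ : V^n → V^n. Suppose M^n is injective on V^{-n} for all n ≥ 0. Then for n > 0 and v ∈ V^{-n} with L₀ v invertible-nonzero (i.e., v lies in an L₀-eigenspace with nonzero eigenvalue), Q̃ v = 0 implies v = 0. -/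
/-- on a ℤ-graded space with `Q̃` of degree 1, `M` of degree 2,
`L₀` of degree 0 satisfying `Q̃² = -L₀M` and pairwise commutativity, if `M^n` is
injective on `V^{-n}` for all `n ≥ 0`, then for `n > 0` and `v ∈ V^{-n}` lying in
an `L₀`-eigenspace with nonzero eigenvalue, `Q̃ v = 0` implies `v = 0`. -/
theorem Qt_injective_on_negative_degree
    {W : Type*} [AddCommGroup W] [Module ℚ W]
    (Qt M L0 : Module.End ℚ W) (G : ℤ → Submodule ℚ W)
    (hQtG : ∀ n : ℤ, ∀ v ∈ G n, Qt v ∈ G (n + 1))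
    (hMG : ∀ n : ℤ, ∀ v ∈ G n, M v ∈ G (n + 2))
    (hL0G : ∀ n : ℤ, ∀ v ∈ G n, L0 v ∈ G n)
    (hQt2 : Qt * Qt = -(L0 * M))
    (hQM : Qt * M = M * Qt) (hQL : Qt * L0 = L0 * Qt) (hLM : L0 * M = M * L0)
    (hMinj : ∀ n : ℕ, ∀ v ∈ G (-(n : ℤ)), (M ^ n) v = 0 → v = 0) :
    ∀ n : ℕ, 0 < n → ∀ v ∈ G (-(n : ℤ)), ∀ μ : ℚ, μ ≠ 0 → L0 v = μ • v →
      Qt v = 0 → v = 0 := by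
  intro n hn v hv μ hμ hL hQ
  have h1 : (Qt * Qt) v = 0 := by
    simp [Module.End.mul_apply, hQ]
  rw [hQt2] at h1
  have h2 : (M * L0) v = 0 := by
    rw [← hLM]
    simpa using h1
  have h3 : μ • M v = 0 := by
    have := h2
    rw [Module.End.mul_apply, hL, map_smul] at this
    exact this
  have hMv : M v = 0 := by
    have := smul_eq_zero.mp h3
    tauto
  have hMn : (M ^ n) v = 0 := by
    obtain ⟨m, rfl⟩ := Nat.exists_eq_succ_of_ne_zero hn.ne'
    rw [pow_succ, Module.End.mul_apply, hMv, map_zero]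
  exact hMinj n v hv hMn
end

section
/- With operators Q̃, M, L₀ on a graded vector space V = ⊕_n V^n as above (Q̃² = −L₀M, all three commuting pairwise in the graded sense, Q̃ of degree 1, M of degree 2, L₀ of degree 0), suppose additionally that M^{n+1} : V^{-(n+1)} → V^{n+1} is surjective and L₀ acts invertibly on the subspace considered. Then for every n ≥ 0, Q̃ maps the L₀-nonzero part of V^n onto the L₀-nonzero part of V^{n+1}. -/
/-- with `Q̃² = -L₀M`, pairwise commutativity, `Q̃` of degree 1, `M` of
degree 2, `L₀` of degree 0, and `M^{n+1} : V^{-(n+1)} → V^{n+1}` surjective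
(compatibly with `L₀`-eigenspaces), `Q̃` maps the `L₀`-nonzero part of `V^n` onto the
`L₀`-nonzero part of `V^{n+1}` for every `n ≥ 0`: it maps `L₀`-eigenvectors with
nonzero eigenvalue in `V^n` to such in `V^{n+1}`, and every such eigenvector of
`V^{n+1}` is attained. -/
theorem Qt_maps_L0_nonzero_onto
    {W : Type*} [AddCommGroup W] [Module ℚ W]
    (Qt M L0 : Module.End ℚ W) (G : ℤ → Submodule ℚ W)
    (hQtG : ∀ n : ℤ, ∀ v ∈ G n, Qt v ∈ G (n + 1))
    (hMG : ∀ n : ℤ, ∀ v ∈ G n, M v ∈ G (n + 2))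
    (hL0G : ∀ n : ℤ, ∀ v ∈ G n, L0 v ∈ G n)
    (hQt2 : Qt * Qt = -(L0 * M))
    (hQM : Qt * M = M * Qt) (hQL : Qt * L0 = L0 * Qt) (hLM : L0 * M = M * L0)
    (hMsurj : ∀ (n : ℕ) (μ : ℚ), ∀ w ∈ G ((n : ℤ) + 1), L0 w = μ • w →
      ∃ g ∈ G (-((n : ℤ) + 1)), L0 g = μ • g ∧ (M ^ (n + 1)) g = w) :
    ∀ (n : ℕ) (μ : ℚ), μ ≠ 0 →
      (∀ v ∈ G (n : ℤ), L0 v = μ • v → Qt v ∈ G ((n : ℤ) + 1) ∧ L0 (Qt v) = μ • Qt v) ∧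
      (∀ w ∈ G ((n : ℤ) + 1), L0 w = μ • w →
        ∃ v ∈ G (n : ℤ), L0 v = μ • v ∧ Qt v = w) := by
  intro n μ hμ
  constructor
  · intro v hv hL
    refine ⟨hQtG _ v hv, ?_⟩
    have : L0 (Qt v) = Qt (L0 v) := by
      have := congrArg (fun f => f v) hQL
      simpa using this.symm
    rw [this, hL, map_smul]
  · intro w hw hLw
    obtain ⟨g, hg, hLg, hMg⟩ := hMsurj n μ w hw hLw
    -- membership of iterated M powers
    have hpow : ∀ k : ℕ, (M ^ k) g ∈ G (-((n : ℤ) + 1) + 2 * k) := by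
      intro k
      induction k with
      | zero => simpa using hg
      | succ k ih =>
          have : (M ^ (k + 1)) g = M ((M ^ k) g) := by
            rw [pow_succ']; rfl
          rw [this]
          have := hMG _ _ ih
          convert this using 2
          push_cast; ring
    have hMn : (M ^ n) g ∈ G ((n : ℤ) - 1) := by
      have := hpow n
      convert this using 2
      push_cast; ring
    -- L0 commutes with M^k
    have hcomm : L0 * M ^ n = M ^ n * L0 := Commute.pow_right hLM n
    have hLMn : L0 ((M ^ n) g) = μ • (M ^ n) g := by
      have h1 : L0 ((M ^ n) g) = (M ^ n) (L0 g) := by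
        have := congrArg (fun f => f g) hcomm
        simpa using this
      rw [h1, hLg, map_smul]
    set x := (M ^ n) g with hx
    refine ⟨(-μ⁻¹) • Qt x, Submodule.smul_mem _ _ ?_, ?_, ?_⟩
    · have := hQtG _ _ hMn
      simpa using this
    · rw [map_smul]
      have h1 : L0 (Qt x) = Qt (L0 x) := by
        have := congrArg (fun f => f x) hQL
        simpa using this.symm
      rw [h1, hLMn, map_smul]
      rw [smul_comm]
    · rw [map_smul]
      have h2 : Qt (Qt x) = -(L0 (M x)) := by
        have := congrArg (fun f => f x) hQt2
        simpa using this
      have h3 : M x = w := by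
        rw [hx, ← hMg, pow_succ']; rfl
      rw [h2, h3, hLw]
      rw [smul_neg, neg_smul, neg_neg, smul_smul, inv_mul_cancel₀ hμ, one_smul]
end

section
/- In the same abstract setup (Q̃² = −L₀M, W₁ the partial inverse of M, L₀ invertible), fix a real parameter a ≠ 1 and define the gauge condition Mω + aQ̃φ = 0 on pairs (φ, ω) ∈ V⁰ × V^{-1}. Then: (i) any (φ, ω) can be gauge transformed (via δφ = Q̃λ + Mρ, δω = L₀λ − Q̃ρ) to satisfy the condition, using the parameter (1/(a−1))(1/L₀)W₁(Mω + aQ̃φ); (ii) a gauge transformation preserving the condition satisfies M(1−a)(L₀λ − Q̃ρ) = 0 and hence, for a ≠ 1, acts trivially on (φ, ω). -/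
/-- the one-parameter family of gauge conditions
`Mω + aQ̃φ = 0` (`a ≠ 1`) fixes the gauge.  Same abstract setup as for the
Landau-type gauge: `Q̃² = -L₀M`, pairwise commutativity, `L₀` invertible with
inverse `L₀⁻¹`, `W₁` the partial inverse of `M`, `M` injective on `V^{-1}` and
`V^{-2}`; gauge transformation `δφ = Q̃λ + Mρ`, `δω = L₀λ - Q̃ρ`.  Then:
(i) the parameter `λ = (1/(a-1))(1/L₀)W₁(Mω + aQ̃φ)` (with `ρ = 0`) brings any
`(φ, ω)` to satisfy the condition;
(ii) any gauge transformation preserving the condition satisfies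
`(1-a)M(L₀λ - Q̃ρ) = 0` and hence acts trivially. -/
theorem a_gauge_fixing
    {W : Type*} [AddCommGroup W] [Module ℚ W]
    (Qt M L0 L0inv W1 : Module.End ℚ W) (G : ℤ → Submodule ℚ W)
    (a : ℚ) (ha : a ≠ 1)
    (hQtG : ∀ n : ℤ, ∀ v ∈ G n, Qt v ∈ G (n + 1))
    (hMG : ∀ n : ℤ, ∀ v ∈ G n, M v ∈ G (n + 2))
    (hL0G : ∀ n : ℤ, ∀ v ∈ G n, L0 v ∈ G n)
    (hL0invG : ∀ n : ℤ, ∀ v ∈ G n, L0inv v ∈ G n)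
    (hW1G : ∀ v ∈ G 1, W1 v ∈ G (-1))
    (hQt2 : Qt * Qt = -(L0 * M))
    (hQM : Qt * M = M * Qt) (hQL : Qt * L0 = L0 * Qt) (hLM : L0 * M = M * L0)
    (hL0i : L0 * L0inv = 1) (hL0i' : L0inv * L0 = 1)
    (hL0iQ : L0inv * Qt = Qt * L0inv) (hL0iM : L0inv * M = M * L0inv)
    (hW1M : ∀ v ∈ G (-1), W1 (M v) = v)
    (hMW1 : ∀ w ∈ G 1, M (W1 w) = w)
    (hMinj : ∀ v : W, (v ∈ G (-1) ∨ v ∈ G (-2)) → M v = 0 → v = 0) :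
    (∀ φ ∈ G 0, ∀ ω ∈ G (-1),
      M (ω + L0 ((a - 1)⁻¹ • L0inv (W1 (M ω + a • Qt φ)))) +
        a • Qt (φ + Qt ((a - 1)⁻¹ • L0inv (W1 (M ω + a • Qt φ)))) = 0) ∧
    (∀ lam ∈ G (-1), ∀ rho ∈ G (-2),
      M (L0 lam - Qt rho) + a • Qt (Qt lam + M rho) = 0 →
        (1 - a) • M (L0 lam - Qt rho) = 0 ∧
        Qt lam + M rho = 0 ∧ L0 lam - Qt rho = 0) := by

  have pQt2 : ∀ x : W, Qt (Qt x) = -(L0 (M x)) := fun x => by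
    have := congrArg (fun f : Module.End ℚ W => f x) hQt2
    simpa using this
  have pQM : ∀ x : W, Qt (M x) = M (Qt x) := fun x => by
    have := congrArg (fun f : Module.End ℚ W => f x) hQM
    simpa using this
  have pLM : ∀ x : W, L0 (M x) = M (L0 x) := fun x => by
    have := congrArg (fun f : Module.End ℚ W => f x) hLM
    simpa using this
  have pL0i : ∀ x : W, L0 (L0inv x) = x := fun x => by
    have := congrArg (fun f : Module.End ℚ W => f x) hL0i
    simpa using this
  have pL0i' : ∀ x : W, L0inv (L0 x) = x := fun x => by
    have := congrArg (fun f : Module.End ℚ W => f x) hL0i'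
    simpa using this
  have pL0iQ : ∀ x : W, L0inv (Qt x) = Qt (L0inv x) := fun x => by
    have := congrArg (fun f : Module.End ℚ W => f x) hL0iQ
    simpa using this
  have pL0iM : ∀ x : W, L0inv (M x) = M (L0inv x) := fun x => by
    have := congrArg (fun f : Module.End ℚ W => f x) hL0iM
    simpa using this
  have hka : (1 - a) * (a - 1)⁻¹ = -1 := by
    have h : a - 1 ≠ 0 := sub_ne_zero.mpr ha
    field_simp
    ring
  constructor
  · intro φ hφ ω hω
    set u := M ω + a • Qt φ with hu
    have hu1 : u ∈ G 1 := by
      have h1 : M ω ∈ G 1 := by simpa using hMG (-1) ω hω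
      have h2 : Qt φ ∈ G 1 := by simpa using hQtG 0 φ hφ
      exact add_mem h1 (Submodule.smul_mem _ _ h2)
    have hMWu : M (W1 u) = u := hMW1 u hu1
    set k : ℚ := (a - 1)⁻¹ with hk
    have h1 : M (L0 (k • L0inv (W1 u))) = k • u := by
      rw [map_smul, map_smul, pL0i, hMWu]
    have h2 : Qt (Qt (k • L0inv (W1 u))) = -(k • u) := by
      rw [map_smul, map_smul, pQt2, ← pL0iM, pL0i, hMWu, smul_neg]
    have hexp : M (ω + L0 (k • L0inv (W1 u))) + a • Qt (φ + Qt (k • L0inv (W1 u)))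
        = u + ((1 - a) * k) • u := by
      rw [map_add M ω, map_add Qt φ, h1, h2, hu]
      module
    rw [hexp, hka]
    simp
  · intro lam hlam rho hrho hcond
    have key : M (L0 lam - Qt rho) + a • Qt (Qt lam + M rho)
        = (1 - a) • M (L0 lam - Qt rho) := by
      rw [map_sub M, map_add Qt, pQt2, pQM, pLM]
      module
    have hz : (1 - a) • M (L0 lam - Qt rho) = 0 := key ▸ hcond
    have hM0 : M (L0 lam - Qt rho) = 0 := by
      have h : (1 - a) ≠ 0 := sub_ne_zero.mpr (Ne.symm ha)
      exact (smul_eq_zero.mp hz).resolve_left h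
    have hmem : L0 lam - Qt rho ∈ G (-1) := by
      have h1 : L0 lam ∈ G (-1) := hL0G _ _ hlam
      have h2 : Qt rho ∈ G (-1) := by simpa using hQtG (-2) rho hrho
      exact sub_mem h1 h2
    have h0 : L0 lam - Qt rho = 0 := hMinj _ (Or.inl hmem) hM0
    have hlam' : lam = L0inv (Qt rho) := by
      have heq : L0 lam = Qt rho := sub_eq_zero.mp h0
      calc lam = L0inv (L0 lam) := (pL0i' lam).symm
        _ = L0inv (Qt rho) := by rw [heq]
    refine ⟨hz, ?_, h0⟩
    rw [hlam', ← pL0iQ, pQt2, map_neg, pL0i']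
    abel
end

section
/- In the abstract setup with Q̃² = −L₀M, M^n : V^{-n} → V^n isomorphisms with inverses W_n, and L₀ invertible, the orthogonality ⟨(O_aB)_n, (O_aB)_{−n+3}⟩ = 0 holds for the a-gauge operators (O_aB)_n = (b₀M^{n−1} + a c₀b₀M^{n−2}Q̃)B_{3−n} and (O_aB)_{−n+3} = (b₀W_{n−2} + a c₀b₀W_{n−1}Q̃)B_n, for all n > 1. Concretely, using bpz(b₀M^{n−1} + ac₀b₀M^{n−2}Q̃) = (−1)^{n−1}(b₀M^{n−1} + ab₀c₀Q̃M^{n−2}), the pairing reduces to (−1)^n a⟨B_{−n+3}, (b₀M^{n−1}W_{n−1}Q̃ − b₀Q̃M^{n−2}W_{n−2})B_n⟩, which vanishes because M^{n−1}W_{n−1} = id on V^{n−1} ⊇ Q̃·im(M^{n−2}W_{n−2}) and M^{n−2}W_{n−2} = id on the relevant domain. -/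
/-- orthogonality `⟨(O_aB)_n, (O_aB)_{-n+3}⟩ = 0` for the a-gauge
operators `(O_aB)_n = (b₀M^{n-1} + a c₀b₀M^{n-2}Q̃)B_{3-n}` and
`(O_aB)_{-n+3} = (b₀W_{n-2} + a c₀b₀W_{n-1}Q̃)B_n`, for `n > 1`.
Hypotheses: the Clifford relations `b₀² = c₀² = 0`, `b₀c₀ + c₀b₀ = 1`; `M`, `W_k`
commute with `b₀`, `c₀` while `Q̃` anticommutes with them and commutes with `M`;
the BPZ adjointness rule
`bpz(b₀M^{n-1} + a c₀b₀M^{n-2}Q̃) = (-1)^{n-1}(b₀M^{n-1} + a b₀c₀Q̃M^{n-2})`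
expressed for the pairing `P`; and the partial-inverse identities
`M^{n-1}W_{n-1} = id`, `M^{n-2}W_{n-2} = id` on the relevant domains
(`Q̃·b₀`-images and `b₀`-images respectively, corresponding to `V^{n-1}` and
`V^{n-2}`). -/
theorem a_gauge_orthogonality
    {W : Type*} [AddCommGroup W] [Module ℚ W]
    (P : W →ₗ[ℚ] W →ₗ[ℚ] ℚ)
    (b0 c0 qt m : Module.End ℚ W) (w : ℕ → Module.End ℚ W)
    (a : ℚ) (n : ℕ) (hn : 2 ≤ n)
    (hb0 : b0 * b0 = 0) (hc0 : c0 * c0 = 0) (hbc : b0 * c0 + c0 * b0 = 1)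
    (hmb : m * b0 = b0 * m) (hmc : m * c0 = c0 * m)
    (hwb : ∀ k : ℕ, w k * b0 = b0 * w k) (hwc : ∀ k : ℕ, w k * c0 = c0 * w k)
    (hqb : qt * b0 = -(b0 * qt)) (hqc : qt * c0 = -(c0 * qt))
    (hqm : qt * m = m * qt)
    (hbpz : ∀ X Y : W,
      P ((b0 * m ^ (n - 1) + a • (c0 * b0 * m ^ (n - 2) * qt)) X) Y
        = (-1 : ℚ) ^ (n - 1) *
          P X ((b0 * m ^ (n - 1) + a • (b0 * c0 * qt * m ^ (n - 2))) Y))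
    (hid1 : ∀ v : W, (m ^ (n - 1) * w (n - 1)) (qt (b0 v)) = qt (b0 v))
    (hid2 : ∀ v : W, (m ^ (n - 2) * w (n - 2)) (b0 v) = b0 v) :
    ∀ Bm Bn : W,
      P ((b0 * m ^ (n - 1) + a • (c0 * b0 * m ^ (n - 2) * qt)) Bm)
        ((b0 * w (n - 2) + a • (c0 * b0 * w (n - 1) * qt)) Bn) = 0 := by

  intro Bm Bn
  rw [hbpz]
  -- pointwise versions of the algebraic relations
  have pbb : ∀ x : W, b0 (b0 x) = 0 := by
    intro x
    simpa [Module.End.mul_apply] using DFunLike.congr_fun hb0 x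
  have pcc : ∀ x : W, c0 (c0 x) = 0 := by
    intro x
    simpa [Module.End.mul_apply] using DFunLike.congr_fun hc0 x
  have pbcb : ∀ x : W, b0 (c0 (b0 x)) = b0 x := by
    intro x
    have h := DFunLike.congr_fun (congrArg (· * b0) hbc) x
    simpa [add_mul, Module.End.mul_apply, LinearMap.add_apply, pbb] using h
  have pmb : ∀ (k : ℕ) (x : W), (m ^ k) (b0 x) = b0 ((m ^ k) x) := by
    intro k x
    have h : m ^ k * b0 = b0 * m ^ k := Commute.pow_left hmb k
    simpa [Module.End.mul_apply] using DFunLike.congr_fun h x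
  have pmc : ∀ (k : ℕ) (x : W), (m ^ k) (c0 x) = c0 ((m ^ k) x) := by
    intro k x
    have h : m ^ k * c0 = c0 * m ^ k := Commute.pow_left hmc k
    simpa [Module.End.mul_apply] using DFunLike.congr_fun h x
  have pwb : ∀ (k : ℕ) (x : W), w k (b0 x) = b0 (w k x) := by
    intro k x
    simpa [Module.End.mul_apply] using DFunLike.congr_fun (hwb k) x
  have pqb : ∀ x : W, qt (b0 x) = -(b0 (qt x)) := by
    intro x
    simpa [Module.End.mul_apply] using DFunLike.congr_fun hqb x
  have pqc : ∀ x : W, qt (c0 x) = -(c0 (qt x)) := by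
    intro x
    simpa [Module.End.mul_apply] using DFunLike.congr_fun hqc x
  have hid1' : ∀ v : W, (m ^ (n - 1)) ((w (n - 1)) (qt (b0 v))) = qt (b0 v) := by
    intro v
    simpa [Module.End.mul_apply] using hid1 v
  have hid2' : ∀ v : W, (m ^ (n - 2)) ((w (n - 2)) (b0 v)) = b0 v := by
    intro v
    simpa [Module.End.mul_apply] using hid2 v
  have hx : b0 (qt Bn) = -(qt (b0 Bn)) := by rw [pqb, neg_neg]
  -- the four product terms
  have e1 : b0 ((m ^ (n - 1)) (b0 (w (n - 2) Bn))) = 0 := by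
    rw [pmb, pbb]
  have e2 : b0 ((m ^ (n - 1)) (c0 (b0 (w (n - 1) (qt Bn))))) = b0 (qt Bn) := by
    conv_lhs => rw [← pwb, hx]
    simp only [map_neg]
    rw [pmc, hid1', pqb]
    simp only [map_neg, neg_neg]
    exact pbcb (qt Bn)
  have e3 : b0 (c0 (qt ((m ^ (n - 2)) (b0 (w (n - 2) Bn))))) = -(b0 (qt Bn)) := by
    rw [← pwb, hid2', pqb]
    simp only [map_neg]
    rw [pbcb]
  have e4 : b0 (c0 (qt ((m ^ (n - 2)) (c0 (b0 (w (n - 1) (qt Bn))))))) = 0 := by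
    rw [pmc, pqc]
    simp [map_neg, pcc]
  have key : (b0 * m ^ (n - 1) + a • (b0 * c0 * qt * m ^ (n - 2)))
      ((b0 * w (n - 2) + a • (c0 * b0 * w (n - 1) * qt)) Bn) = 0 := by
    simp only [LinearMap.add_apply, LinearMap.smul_apply, Module.End.mul_apply,
      map_add, map_smul]
    rw [e1, e2, e3, e4]
    simp [smul_neg]
  rw [key, map_zero, mul_zero]
end
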